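/- arXiv:2411.11741 — 6 statements merged into one kernel-verified Lean document; each statement's English description precedes it below -/
import Mathlib

section
/- Let n ∈ ℕ, p ∈ [0,1]^n, and let f : {0,1}^n → ℝ be monotone and 1-Lipschitz. Then for every s ∈ (0,1] and every t > 0, the measure under μ_{e^{-s}p} of the set {x ∈ {0,1}^n : f(x) ≥ ∫ f dμ_p + t} is at most e^{-s t}. (That is, Pr[f(X^{(s)}) ≥ E[f(X)] + t] ≤ e^{-st}, where X ∼ μ_p and X^{(s)} ∼ μ_{e^{-s}p}.) -/
open MeasureTheory

/-- The Bernoulli measure on `Bool` with parameter `q`. -/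
noncomputable def bernoulliMeasure (q : ℝ) : Measure Bool :=
  (ENNReal.ofReal q) • Measure.dirac true + (ENNReal.ofReal (1 - q)) • Measure.dirac false

/-- The product Bernoulli measure `μ_p` on `{0,1}^n`. -/
noncomputable def productBernoulli {n : ℕ} (p : Fin n → ℝ) : Measure (Fin n → Bool) :=
  Measure.pi fun i => bernoulliMeasure (p i)

/-- `f` is 1-Lipschitz with respect to the Hamming distance on `{0,1}^n`. -/
def OneLipschitz {n : ℕ} (f : (Fin n → Bool) → ℝ) : Prop :=
  ∀ x y : Fin n → Bool,
    |f x - f y| ≤ (Finset.univ.filter fun i => x i ≠ y i).card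

/-!
By Chernoff's bound it suffices to show `E_{e^{-s}p}[e^{s f}] ≤ e^{s E_p[f]}`. This goes by
induction on `n`: averaging `f` over the first coordinate gives a monotone `1`-Lipschitz function
`g` of the others with `E_p[f] = E_p[g]`, and the first coordinate costs nothing because the
increment `D = f(1, y) - f(0, y)` lies in `[0, 1]`, where
`1 + e^{-s} p (e^{s D} - 1) ≤ e^{s p D}`: thinning the weight of the upper value by `e^{-s}`
compensates for the convexity of the exponential.
-/

open Real Finset
open ProbabilityTheory (mgf measure_ge_le_exp_mul_mgf)

lemma exp_sub_one_le_mul_exp (x : ℝ) : exp x - 1 ≤ x * exp x := by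
  nlinarith [add_one_le_exp (-x), exp_pos x, exp_neg x, mul_inv_cancel₀ (exp_pos x).ne']

lemma one_add_exp_neg_mul_exp_sub_one_le {s p D : ℝ} (hs : 0 ≤ s) (hp : 0 ≤ p)
    (hD₀ : 0 ≤ D) (hD₁ : D ≤ 1) :
    1 + exp (-s) * p * (exp (s * D) - 1) ≤ exp (s * (p * D)) := by
  have hsD : exp (s * D) - 1 ≤ s * D * exp s :=
    calc exp (s * D) - 1 ≤ s * D * exp (s * D) := exp_sub_one_le_mul_exp _
      _ ≤ s * D * exp s := by gcongr; nlinarith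
  calc 1 + exp (-s) * p * (exp (s * D) - 1)
      ≤ 1 + exp (-s) * p * (s * D * exp s) := by gcongr
    _ = s * (p * D) + 1 := by rw [exp_neg]; field_simp; ring
    _ ≤ exp (s * (p * D)) := add_one_le_exp _

lemma two_point_mgf_le {s p a b : ℝ} (hs : 0 ≤ s) (hp : 0 ≤ p) (hab : a ≤ b) (hba : b ≤ a + 1) :
    (1 - exp (-s) * p) * exp (s * a) + exp (-s) * p * exp (s * b)
      ≤ exp (s * ((1 - p) * a + p * b)) := by
  have key := one_add_exp_neg_mul_exp_sub_one_le hs hp (sub_nonneg.2 hab) (by linarith : b - a ≤ 1)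
  calc (1 - exp (-s) * p) * exp (s * a) + exp (-s) * p * exp (s * b)
      = exp (s * a) * (1 + exp (-s) * p * (exp (s * (b - a)) - 1)) := by
        rw [mul_sub s b a, exp_sub]; field_simp; ring
    _ ≤ exp (s * a) * exp (s * (p * (b - a))) := by gcongr
    _ = exp (s * ((1 - p) * a + p * b)) := by rw [← exp_add]; ring_nf

lemma exp_neg_mul_mem_Icc {s p : ℝ} (hs : 0 ≤ s) (hp : p ∈ Set.Icc (0 : ℝ) 1) :
    exp (-s) * p ∈ Set.Icc (0 : ℝ) 1 :=
  ⟨mul_nonneg (exp_pos _).le hp.1, mul_le_one₀ (exp_le_one_iff.2 (neg_nonpos.2 hs)) hp.1 hp.2⟩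

lemma hammingDist_cons_cons {n : ℕ} {β : Type*} [DecidableEq β] (a b : β) (x y : Fin n → β) :
    hammingDist (Fin.cons a x : Fin (n + 1) → β) (Fin.cons b y) =
      (if a ≠ b then 1 else 0) + hammingDist x y := by
  simp only [hammingDist, card_filter, Fin.sum_univ_succ, Fin.cons_zero, Fin.cons_succ]

lemma oneLipschitz_iff_hammingDist {n : ℕ} {f : (Fin n → Bool) → ℝ} :
    OneLipschitz f ↔ ∀ x y, |f x - f y| ≤ hammingDist x y :=
  Iff.rfl

lemma Monotone.comp_cons {n : ℕ} {f : (Fin (n + 1) → Bool) → ℝ} (hf : Monotone f) (b : Bool) :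
    Monotone fun y : Fin n → Bool => f (Fin.cons b y) :=
  fun _ _ hy => hf (Fin.cons_le_cons.2 ⟨le_rfl, hy⟩)

lemma OneLipschitz.comp_cons {n : ℕ} {f : (Fin (n + 1) → Bool) → ℝ} (hf : OneLipschitz f)
    (b : Bool) : OneLipschitz fun y : Fin n → Bool => f (Fin.cons b y) := by
  rw [oneLipschitz_iff_hammingDist] at hf ⊢
  intro x y
  simpa [hammingDist_cons_cons] using hf (Fin.cons b x) (Fin.cons b y)

lemma OneLipschitz.cons_true_le_cons_false_add_one {n : ℕ} {f : (Fin (n + 1) → Bool) → ℝ}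
    (hf : OneLipschitz f) (y : Fin n → Bool) : f (Fin.cons true y) ≤ f (Fin.cons false y) + 1 := by
  rw [oneLipschitz_iff_hammingDist] at hf
  have := (abs_le.1 (hf (Fin.cons true y) (Fin.cons false y))).2
  simp only [hammingDist_cons_cons, hammingDist_self] at this
  norm_num at this
  linarith

lemma OneLipschitz.convex_comb {n : ℕ} {f g : (Fin n → Bool) → ℝ} (hf : OneLipschitz f)
    (hg : OneLipschitz g) {a : ℝ} (ha : a ∈ Set.Icc (0 : ℝ) 1) :
    OneLipschitz fun x => (1 - a) * f x + a * g x := by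
  intro x y
  have hf' := abs_le.1 (hf x y)
  have hg' := abs_le.1 (hg x y)
  obtain ⟨ha₀, ha₁⟩ := ha
  rw [abs_le]
  constructor <;> nlinarith

lemma bernoulli_ite_nonneg {q : ℝ} (hq : q ∈ Set.Icc (0 : ℝ) 1) (b : Bool) :
    0 ≤ if b then q else 1 - q := by
  split_ifs
  · exact hq.1
  · exact sub_nonneg.2 hq.2

noncomputable def bernoulliWeight {n : ℕ} (q : Fin n → ℝ) (x : Fin n → Bool) : ℝ :=
  ∏ i, if x i then q i else 1 - q i

lemma bernoulliWeight_nonneg {n : ℕ} {q : Fin n → ℝ} (hq : ∀ i, q i ∈ Set.Icc (0 : ℝ) 1)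
    (x : Fin n → Bool) : 0 ≤ bernoulliWeight q x :=
  prod_nonneg fun i _ => bernoulli_ite_nonneg (hq i) (x i)

lemma bernoulliWeight_cons {n : ℕ} (q : Fin (n + 1) → ℝ) (b : Bool) (y : Fin n → Bool) :
    bernoulliWeight q (Fin.cons b y) =
      (if b then q 0 else 1 - q 0) * bernoulliWeight (Fin.tail q) y := by
  simp only [bernoulliWeight, Fin.prod_univ_succ, Fin.cons_zero, Fin.cons_succ, Fin.tail]

lemma sum_fin_succ_bool {n : ℕ} {M : Type*} [AddCommMonoid M] (F : (Fin (n + 1) → Bool) → M) :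
    ∑ x, F x = ∑ y : Fin n → Bool, (F (Fin.cons false y) + F (Fin.cons true y)) := by
  rw [← (Fin.consEquiv fun _ => Bool).sum_comp, Fintype.sum_prod_type, Fintype.sum_bool,
    ← sum_add_distrib]
  exact sum_congr rfl fun y _ => add_comm _ _

lemma sum_bernoulliWeight_mul_succ {n : ℕ} (q : Fin (n + 1) → ℝ)
    (F : (Fin (n + 1) → Bool) → ℝ) :
    ∑ x, bernoulliWeight q x * F x = ∑ y, bernoulliWeight (Fin.tail q) y *
      ((1 - q 0) * F (Fin.cons false y) + q 0 * F (Fin.cons true y)) := by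
  rw [sum_fin_succ_bool]
  refine sum_congr rfl fun y _ => ?_
  simp only [bernoulliWeight_cons, Bool.false_eq_true, if_false, if_true]
  ring

instance (q : ℝ) : IsFiniteMeasure (bernoulliMeasure q) :=
  ⟨by simp [bernoulliMeasure]⟩

instance {n : ℕ} (q : Fin n → ℝ) : IsFiniteMeasure (productBernoulli q) := by
  unfold productBernoulli; infer_instance

lemma productBernoulli_singleton {n : ℕ} {q : Fin n → ℝ} (hq : ∀ i, q i ∈ Set.Icc (0 : ℝ) 1)
    (x : Fin n → Bool) : productBernoulli q {x} = ENNReal.ofReal (bernoulliWeight q x) := by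
  rw [productBernoulli, ← Set.univ_pi_singleton x, Measure.pi_pi, bernoulliWeight,
    ENNReal.ofReal_prod_of_nonneg]
  · refine prod_congr rfl fun i _ => ?_
    cases x i <;> simp [bernoulliMeasure]
  · exact fun i _ => bernoulli_ite_nonneg (hq i) (x i)

lemma integral_productBernoulli {n : ℕ} {q : Fin n → ℝ} (hq : ∀ i, q i ∈ Set.Icc (0 : ℝ) 1)
    (f : (Fin n → Bool) → ℝ) :
    ∫ x, f x ∂(productBernoulli q) = ∑ x, bernoulliWeight q x * f x := by
  rw [integral_fintype .of_finite]
  refine sum_congr rfl fun x _ => ?_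
  rw [measureReal_def, productBernoulli_singleton hq, ENNReal.toReal_ofReal
    (bernoulliWeight_nonneg hq x), smul_eq_mul]

theorem sum_bernoulliWeight_mul_exp_le {n : ℕ} {p : Fin n → ℝ}
    (hp : ∀ i, p i ∈ Set.Icc (0 : ℝ) 1) {f : (Fin n → Bool) → ℝ} (hf_mono : Monotone f)
    (hf_lip : OneLipschitz f) {s : ℝ} (hs : 0 ≤ s) :
    ∑ x, bernoulliWeight (fun i => exp (-s) * p i) x * exp (s * f x)
      ≤ exp (s * ∑ x, bernoulliWeight p x * f x) := by
  induction n with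
  | zero => simp [bernoulliWeight]
  | succ n ih =>
    set g : (Fin n → Bool) → ℝ :=
      fun y => (1 - p 0) * f (Fin.cons false y) + p 0 * f (Fin.cons true y)
    have hg_mono : Monotone g :=
      ((hf_mono.comp_cons false).const_mul (sub_nonneg.2 (hp 0).2)).add
        ((hf_mono.comp_cons true).const_mul (hp 0).1)
    have hg_lip : OneLipschitz g :=
      (hf_lip.comp_cons false).convex_comb (hf_lip.comp_cons true) (hp 0)
    rw [sum_bernoulliWeight_mul_succ, sum_bernoulliWeight_mul_succ]
    calc _ ≤ ∑ y, bernoulliWeight (fun i => exp (-s) * p i.succ) y * exp (s * g y) := by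
          refine sum_le_sum fun y _ => mul_le_mul_of_nonneg_left ?_
            (bernoulliWeight_nonneg (fun i => exp_neg_mul_mem_Icc hs (hp i.succ)) y)
          exact two_point_mgf_le hs (hp 0).1 (hf_mono (Fin.cons_le_cons.2 ⟨by decide, le_rfl⟩))
            (hf_lip.cons_true_le_cons_false_add_one y)
      _ ≤ _ := ih (fun i => hp i.succ) hg_mono hg_lip

lemma mgf_productBernoulli_le {n : ℕ} {p : Fin n → ℝ} (hp : ∀ i, p i ∈ Set.Icc (0 : ℝ) 1)
    {f : (Fin n → Bool) → ℝ} (hf_mono : Monotone f) (hf_lip : OneLipschitz f) {s : ℝ}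
    (hs : 0 ≤ s) :
    mgf f (productBernoulli fun i => exp (-s) * p i) s
      ≤ exp (s * ∫ x, f x ∂(productBernoulli p)) := by
  rw [mgf, integral_productBernoulli (fun i => exp_neg_mul_mem_Icc hs (hp i)),
    integral_productBernoulli hp]
  exact sum_bernoulliWeight_mul_exp_le hp hf_mono hf_lip hs

theorem bicriterion_concentration_general {n : ℕ} (p : Fin n → ℝ)
    (hp : ∀ i, p i ∈ Set.Icc (0 : ℝ) 1)
    (f : (Fin n → Bool) → ℝ) (hf_mono : Monotone f) (hf_lip : OneLipschitz f)
    (s t : ℝ) (hs : s ∈ Set.Ioc (0 : ℝ) 1) :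
    productBernoulli (fun i => Real.exp (-s) * p i)
        {x | (∫ y, f y ∂(productBernoulli p)) + t ≤ f x}
      ≤ ENNReal.ofReal (Real.exp (-(s * t))) := by
  set m := ∫ y, f y ∂(productBernoulli p)
  rw [← ofReal_measureReal]
  refine ENNReal.ofReal_le_ofReal ?_
  calc _ ≤ exp (-s * (m + t)) * mgf f _ s :=
        measure_ge_le_exp_mul_mgf _ hs.1.le .of_finite
    _ ≤ exp (-s * (m + t)) * exp (s * m) := by
        gcongr; exact mgf_productBernoulli_le hp hf_mono hf_lip hs.1.le
    _ = exp (-(s * t)) := by rw [← exp_add]; ring_nf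

/-- **Bicriterion concentration inequality**: if `f` is monotone and 1-Lipschitz, then for
`s ∈ (0,1]` and `t > 0`, `Pr[f(X^{(s)}) ≥ E[f(X)] + t] ≤ e^{-st}` where `X ∼ μ_p` and
`X^{(s)} ∼ μ_{e^{-s}p}`. -/
theorem bicriterion_concentration {n : ℕ} (p : Fin n → ℝ)
    (hp : ∀ i, p i ∈ Set.Icc (0 : ℝ) 1)
    (f : (Fin n → Bool) → ℝ) (hf_mono : Monotone f) (hf_lip : OneLipschitz f)
    (s t : ℝ) (hs : s ∈ Set.Ioc (0 : ℝ) 1) (ht : 0 < t) :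
    productBernoulli (fun i => Real.exp (-s) * p i)
        {x | (∫ y, f y ∂(productBernoulli p)) + t ≤ f x}
      ≤ ENNReal.ofReal (Real.exp (-(s * t))) :=
  bicriterion_concentration_general p hp f hf_mono hf_lip s t hs
end

section
/- Let φ(x) = e^x − x − 1. For every λ ∈ (0,1], φ(−λ)/λ ≤ λ e^{-λ}; equivalently, e^{-λ} + λ − 1 ≤ λ² e^{-λ}. -/
/-- `φ(x) = eˣ − x − 1`. -/
noncomputable def phi (x : ℝ) : ℝ := Real.exp x - x - 1

/-- For every `λ ∈ (0,1]`, `φ(−λ)/λ ≤ λ e^{−λ}`. -/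
theorem phi_div_le (l : ℝ) (hl : l ∈ Set.Ioc (0 : ℝ) 1) :
    phi (-l) / l ≤ l * Real.exp (-l) := by
  obtain ⟨h0, h1⟩ := hl
  rw [phi, div_le_iff₀ h0]
  have h2 : (1 : ℝ) + l ≤ Real.exp l := by
    have := Real.add_one_le_exp l; linarith
  have h3 : Real.exp (-l) * Real.exp l = 1 := by
    rw [← Real.exp_add]; simp
  have h4 : Real.exp (-l) * (1 + l) ≤ 1 := by
    calc Real.exp (-l) * (1 + l) ≤ Real.exp (-l) * Real.exp l :=
          mul_le_mul_of_nonneg_left h2 (Real.exp_pos _).le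
      _ = 1 := h3
  nlinarith [Real.exp_pos (-l), mul_nonneg (sub_nonneg.mpr h1) (sub_nonneg.mpr h4)]
end

section
/- Let c ∈ ℝ and let G : ℝ → ℝ be differentiable at every point of (0,1] with λ · G'(λ) ≤ G(λ) for all λ ∈ (0,1], and suppose that G(λ)/λ → c as λ → 0⁺. Then G(λ) ≤ c·λ for all λ ∈ (0,1]. -/
/-- If `G` is differentiable on `(0,1]` with `λ·G'(λ) ≤ G(λ)` there, and `G(λ)/λ → c`
as `λ → 0⁺`, then `G(λ) ≤ c·λ` for all `λ ∈ (0,1]`. -/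
theorem differential_inequality (c : ℝ) (G G' : ℝ → ℝ)
    (hderiv : ∀ l ∈ Set.Ioc (0 : ℝ) 1, HasDerivAt G (G' l) l)
    (hineq : ∀ l ∈ Set.Ioc (0 : ℝ) 1, l * G' l ≤ G l)
    (hlim : Filter.Tendsto (fun l => G l / l) (nhdsWithin 0 (Set.Ioi 0)) (nhds c)) :
    ∀ l ∈ Set.Ioc (0 : ℝ) 1, G l ≤ c * l := by
  intro l hl
  set H : ℝ → ℝ := fun x => G x / x with hH
  have key : ∀ x ∈ Set.Ioc (0:ℝ) 1, HasDerivAt H ((G' x * x - G x * 1) / x^2) x := by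
    intro x hx
    exact (hderiv x hx).div (hasDerivAt_id x) (ne_of_gt hx.1)
  have hanti : AntitoneOn H (Set.Ioc 0 1) := by
    apply antitoneOn_of_deriv_nonpos (convex_Ioc 0 1)
    · exact fun x hx => (key x hx).continuousAt.continuousWithinAt
    · intro x hx
      rw [interior_Ioc] at hx
      exact ((key x (Set.Ioo_subset_Ioc_self hx)).differentiableAt.differentiableWithinAt)
    · intro x hx
      rw [interior_Ioc] at hx
      have hx' : x ∈ Set.Ioc (0:ℝ) 1 := Set.Ioo_subset_Ioc_self hx
      rw [(key x hx').deriv]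
      apply div_nonpos_of_nonpos_of_nonneg
      · nlinarith [hineq x hx', hx.1]
      · positivity
  have hev : ∀ᶠ μ in nhdsWithin 0 (Set.Ioi 0), H l ≤ H μ := by
    filter_upwards [Ioo_mem_nhdsGT_of_mem (Set.mem_Ico.2 ⟨le_refl (0:ℝ), hl.1⟩)] with μ hμ
    exact hanti ⟨hμ.1, le_trans hμ.2.le hl.2⟩ hl hμ.2.le
  have hle : H l ≤ c := ge_of_tendsto hlim hev
  have := (div_le_iff₀ hl.1).1 hle
  linarith
end

section
/- Let M be a matroid on a finite ground set E and let k ≥ 1 be an integer. Then there exists a matroid on ground set E whose independent sets are exactly the sets of the form I₁ ∪ I₂ ∪ ⋯ ∪ I_k, where each I_j is independent in M. -/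
open Set

namespace KfoldUnionAux

variable {α : Type*}

/-- Asymmetric key step in the proof of the matroid union theorem: if `(A₁, A₂)` is a
disjoint representation of `A` maximizing `|A₁ ∩ B₁| + |A₂ ∩ B₂|`, and `|A₁| < |B₁|`,
then `A` can be augmented by an element of `B \ A`. -/
lemma aug_case (M₁ M₂ : Matroid α) {A B A₁ A₂ B₁ B₂ : Set α}
    (hAfin : A.Finite) (hBfin : B.Finite)
    (hA1 : M₁.Indep A₁) (hA2 : M₂.Indep A₂) (hAu : A₁ ∪ A₂ = A) (_hAd : Disjoint A₁ A₂)
    (hB1 : M₁.Indep B₁) (_hB2 : M₂.Indep B₂) (hBu : B₁ ∪ B₂ = B) (hBd : Disjoint B₁ B₂)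
    (hmax : ∀ C₁ C₂, M₁.Indep C₁ → M₂.Indep C₂ → C₁ ∪ C₂ = A → Disjoint C₁ C₂ →
      (C₁ ∩ B₁).ncard + (C₂ ∩ B₂).ncard ≤ (A₁ ∩ B₁).ncard + (A₂ ∩ B₂).ncard)
    (hlt : A₁.ncard < B₁.ncard) :
    ∃ e ∈ B, e ∉ A ∧ ∃ C₁ C₂, M₁.Indep C₁ ∧ M₂.Indep C₂ ∧ insert e A = C₁ ∪ C₂ := by
  have hA1fin : A₁.Finite := hAfin.subset (hAu ▸ subset_union_left)
  have hA2fin : A₂.Finite := hAfin.subset (hAu ▸ subset_union_right)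
  have hB1fin : B₁.Finite := hBfin.subset (hBu ▸ subset_union_left)
  -- augment A₁ from B₁ in M₁
  have hcard : A₁.encard < B₁.encard := by
    rw [← hA1fin.cast_ncard_eq, ← hB1fin.cast_ncard_eq]
    exact_mod_cast hlt
  obtain ⟨e, heB1, hins⟩ := hA1.augment hB1 hcard
  obtain ⟨heB1', heA1⟩ := heB1
  by_cases heA : e ∈ A
  · -- contradiction with maximality
    exfalso
    have heA2 : e ∈ A₂ := by
      rcases (hAu ▸ heA : e ∈ A₁ ∪ A₂) with h | h
      · exact absurd h heA1
      · exact h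
    have hC1 : M₁.Indep (insert e A₁) := hins
    have hC2 : M₂.Indep (A₂ \ {e}) := hA2.subset diff_subset
    have hCu : insert e A₁ ∪ (A₂ \ {e}) = A := by
      rw [insert_union, ← union_insert, insert_diff_singleton, insert_eq_of_mem heA2, hAu]
    have hCd : Disjoint (insert e A₁) (A₂ \ {e}) := by
      rw [disjoint_iff_forall_ne]
      rintro x (rfl | hx) y ⟨hy, hy'⟩ rfl
      · exact hy' rfl
      · exact _hAd.ne_of_mem hx hy rfl
    have key := hmax _ _ hC1 hC2 hCu hCd
    have h1 : (insert e A₁ ∩ B₁).ncard = (A₁ ∩ B₁).ncard + 1 := by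
      have : insert e A₁ ∩ B₁ = insert e (A₁ ∩ B₁) := by
        rw [insert_inter_of_mem heB1']
      rw [this, ncard_insert_of_notMem (fun h => heA1 h.1) (hA1fin.inter_of_left _)]
    have h2 : (A₂ \ {e}) ∩ B₂ = A₂ ∩ B₂ := by
      have heB2 : e ∉ B₂ := fun h => hBd.ne_of_mem heB1' h rfl
      ext x
      simp only [mem_inter_iff, mem_diff, mem_singleton_iff]
      constructor
      · rintro ⟨⟨h, _⟩, h2⟩; exact ⟨h, h2⟩
      · rintro ⟨h, h2⟩
        exact ⟨⟨h, fun hx => heB2 (hx ▸ h2)⟩, h2⟩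
    rw [h1, h2] at key
    omega
  · exact ⟨e, hBu ▸ Or.inl heB1', heA, insert e A₁, A₂, hins, hA2,
      by rw [← hAu, insert_union]⟩

/-- Augmentation property for the union of two matroids. -/
lemma union_aug (M₁ M₂ : Matroid α) (h1 : M₁.E.Finite) (h2 : M₂.E.Finite)
    {A B : Set α}
    (hA : ∃ A₁ A₂, M₁.Indep A₁ ∧ M₂.Indep A₂ ∧ A = A₁ ∪ A₂)
    (hB : ∃ B₁ B₂, M₁.Indep B₁ ∧ M₂.Indep B₂ ∧ B = B₁ ∪ B₂)
    (hcard : A.ncard < B.ncard) :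
    ∃ e ∈ B, e ∉ A ∧ ∃ C₁ C₂, M₁.Indep C₁ ∧ M₂.Indep C₂ ∧ insert e A = C₁ ∪ C₂ := by
  obtain ⟨A₁', A₂', hA1', hA2', rfl⟩ := hA
  obtain ⟨B₁', B₂', hB1', hB2', rfl⟩ := hB
  set A := A₁' ∪ A₂' with hAdef
  set B := B₁' ∪ B₂' with hBdef
  have hAfin : A.Finite :=
    (h1.subset hA1'.subset_ground).union (h2.subset hA2'.subset_ground)
  have hBfin : B.Finite :=
    (h1.subset hB1'.subset_ground).union (h2.subset hB2'.subset_ground)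
  -- disjointify B
  set B₁ := B₁' with hB1def
  set B₂ := B₂' \ B₁' with hB2def
  have hB1 : M₁.Indep B₁ := hB1'
  have hB2 : M₂.Indep B₂ := hB2'.subset diff_subset
  have hBu : B₁ ∪ B₂ = B := by rw [hB1def, hB2def, union_diff_self]
  have hBd : Disjoint B₁ B₂ := disjoint_sdiff_right
  have hB1fin : B₁.Finite := hBfin.subset (hBu ▸ subset_union_left)
  have hB2fin : B₂.Finite := hBfin.subset (hBu ▸ subset_union_right)
  -- the set of disjoint representations of A
  set S : Set (Set α × Set α) :=
    {p | M₁.Indep p.1 ∧ M₂.Indep p.2 ∧ p.1 ∪ p.2 = A ∧ Disjoint p.1 p.2} with hSdef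
  have hSne : S.Nonempty := by
    refine ⟨(A₁', A₂' \ A₁'), hA1', hA2'.subset diff_subset, ?_, disjoint_sdiff_right⟩
    rw [union_diff_self]
  have hSfin : S.Finite := by
    apply Finite.subset (hAfin.finite_subsets.prod hAfin.finite_subsets)
    rintro ⟨p1, p2⟩ ⟨-, -, hu, -⟩
    exact ⟨hu ▸ subset_union_left, hu ▸ subset_union_right⟩
  obtain ⟨⟨A₁, A₂⟩, hmem, hmax⟩ :=
    S.exists_max_image (fun p => (p.1 ∩ B₁).ncard + (p.2 ∩ B₂).ncard) hSfin hSne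
  obtain ⟨hA1, hA2, hAu, hAd⟩ := hmem
  simp only at hA1 hA2 hAu hAd hmax
  have hA1fin : A₁.Finite := hAfin.subset (hAu ▸ subset_union_left)
  have hA2fin : A₂.Finite := hAfin.subset (hAu ▸ subset_union_right)
  have hAcard : A.ncard = A₁.ncard + A₂.ncard := by
    rw [← hAu, ncard_union_eq hAd hA1fin hA2fin]
  have hBcard : B.ncard = B₁.ncard + B₂.ncard := by
    rw [← hBu, ncard_union_eq hBd hB1fin hB2fin]
  have hmax' : ∀ C₁ C₂, M₁.Indep C₁ → M₂.Indep C₂ → C₁ ∪ C₂ = A → Disjoint C₁ C₂ →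
      (C₁ ∩ B₁).ncard + (C₂ ∩ B₂).ncard ≤ (A₁ ∩ B₁).ncard + (A₂ ∩ B₂).ncard := by
    intro C₁ C₂ hc1 hc2 hcu hcd
    exact hmax (C₁, C₂) ⟨hc1, hc2, hcu, hcd⟩
  rcases lt_or_ge A₁.ncard B₁.ncard with hlt | hge
  · exact aug_case M₁ M₂ hAfin hBfin hA1 hA2 hAu hAd hB1 hB2 hBu hBd hmax' hlt
  · have hlt2 : A₂.ncard < B₂.ncard := by omega
    have hmax'' : ∀ C₁ C₂, M₂.Indep C₁ → M₁.Indep C₂ → C₁ ∪ C₂ = A → Disjoint C₁ C₂ →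
        (C₁ ∩ B₂).ncard + (C₂ ∩ B₁).ncard ≤ (A₂ ∩ B₂).ncard + (A₁ ∩ B₁).ncard := by
      intro C₁ C₂ hc1 hc2 hcu hcd
      have := hmax' C₂ C₁ hc2 hc1 (by rw [union_comm]; exact hcu) hcd.symm
      omega
    obtain ⟨e, heB, heA, C₁, C₂, hc1, hc2, hce⟩ :=
      aug_case M₂ M₁ hAfin hBfin hA2 hA1 (by rw [union_comm]; exact hAu) hAd.symm
        hB2 hB1 (by rw [union_comm]; exact hBu) hBd.symm hmax'' hlt2
    exact ⟨e, heB, heA, C₂, C₁, hc2, hc1, by rw [union_comm]; exact hce⟩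

/-- **Matroid union (binary case).** -/
lemma union_exists (M₁ M₂ : Matroid α) (h1 : M₁.E.Finite) (h2 : M₂.E.Finite) :
    ∃ N : Matroid α, N.E = M₁.E ∪ M₂.E ∧
      ∀ I : Set α, N.Indep I ↔
        ∃ I₁ I₂, M₁.Indep I₁ ∧ M₂.Indep I₂ ∧ I = I₁ ∪ I₂ := by
  refine ⟨(IndepMatroid.ofFinite (E := M₁.E ∪ M₂.E) (h1.union h2)
    (fun I => ∃ I₁ I₂, M₁.Indep I₁ ∧ M₂.Indep I₂ ∧ I = I₁ ∪ I₂)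
    ⟨∅, ∅, M₁.empty_indep, M₂.empty_indep, by simp⟩
    ?_ ?_ ?_).matroid, by simp, fun I => by simp⟩
  · rintro I J ⟨J₁, J₂, hJ1, hJ2, rfl⟩ hIJ
    exact ⟨I ∩ J₁, I ∩ J₂, hJ1.subset inter_subset_right, hJ2.subset inter_subset_right,
      by rw [← inter_union_distrib_left, inter_eq_left.2 hIJ]⟩
  · intro I J hI hJ hcard
    obtain ⟨e, heJ, heI, C₁, C₂, hc1, hc2, hce⟩ := union_aug M₁ M₂ h1 h2 hI hJ hcard
    exact ⟨e, heJ, heI, C₁, C₂, hc1, hc2, hce⟩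
  · rintro I ⟨I₁, I₂, hI1, hI2, rfl⟩
    exact union_subset_union hI1.subset_ground hI2.subset_ground

lemma iUnion_snoc {k : ℕ} (Is : Fin k → Set α) (J : Set α) :
    (⋃ j, (Fin.snoc Is J : Fin (k+1) → Set α) j) = (⋃ i, Is i) ∪ J := by
  apply subset_antisymm
  · refine iUnion_subset fun j => ?_
    refine Fin.lastCases ?_ ?_ j
    · simp
    · intro i
      simp only [Fin.snoc_castSucc]
      exact (subset_iUnion Is i).trans subset_union_left
  · refine union_subset (iUnion_subset fun i => ?_) ?_
    · have := subset_iUnion (Fin.snoc Is J) i.castSucc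
      simpa using this
    · have := subset_iUnion (Fin.snoc Is J) (Fin.last k)
      simpa using this

end KfoldUnionAux

/-- **k-fold matroid union.** For any matroid `M` on a finite ground set and any `k ≥ 1`,
there is a matroid on the same ground set whose independent sets are exactly the unions
`I₁ ∪ ⋯ ∪ I_k` of `k` independent sets of `M`. -/
theorem kfold_union_exists {α : Type*} (M : Matroid α) (hfin : M.E.Finite)
    (k : ℕ) (hk : 1 ≤ k) :
    ∃ N : Matroid α, N.E = M.E ∧
      ∀ I : Set α, N.Indep I ↔
        ∃ Is : Fin k → Set α, (∀ j, M.Indep (Is j)) ∧ I = ⋃ j, Is j := by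
  induction k, hk using Nat.le_induction with
  | base =>
      refine ⟨M, rfl, fun I => ⟨fun hI => ⟨fun _ => I, fun _ => hI, (Set.iUnion_const I).symm⟩, ?_⟩⟩
      rintro ⟨Is, hIs, rfl⟩
      have : (⋃ j, Is j) = Is 0 := by
        apply subset_antisymm
        · exact Set.iUnion_subset fun j => by rw [Subsingleton.elim j 0]
        · exact Set.subset_iUnion Is 0
      rw [this]
      exact hIs 0
  | succ k hk ih =>
      obtain ⟨N, hNE, hNI⟩ := ih
      obtain ⟨N', hN'E, hN'I⟩ := KfoldUnionAux.union_exists N M (hNE ▸ hfin) hfin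
      refine ⟨N', by rw [hN'E, hNE, Set.union_self], fun I => ?_⟩
      rw [hN'I]
      constructor
      · rintro ⟨I₁, I₂, hI1, hI2, rfl⟩
        obtain ⟨Is, hIs, rfl⟩ := (hNI I₁).1 hI1
        refine ⟨Fin.snoc Is I₂, ?_, ?_⟩
        · intro j
          refine Fin.lastCases ?_ ?_ j
          · simpa using hI2
          · intro i; simpa using hIs i
        · exact (KfoldUnionAux.iUnion_snoc Is I₂).symm
      · rintro ⟨Is, hIs, rfl⟩
        refine ⟨⋃ i : Fin k, Is i.castSucc, Is (Fin.last k),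
          (hNI _).2 ⟨fun i => Is i.castSucc, fun i => hIs _, rfl⟩, hIs _, ?_⟩
        have hsnoc : (Fin.snoc (fun i => Is i.castSucc) (Is (Fin.last k)) :
            Fin (k+1) → Set α) = Is := by
          funext j
          exact Fin.lastCases (by simp) (fun i => by simp) j
        rw [← KfoldUnionAux.iUnion_snoc, hsnoc]
end

section
/- Let M be a matroid on a finite ground set E, let k ≥ 1 be an integer, and let N be the extended k-fold union of M, with rank function rank_N and closure (span) operator closure_N. For any fixed e ∈ E, define occ_e(S) = k − rank_N(S ∪ ({e} × [k])) + rank_N(S) for S ⊆ E × [k]. Then for every (e,i) ∈ E × [k] and every S ⊆ E × [k], if occ_e(S) < k then (e,i) ∉ closure_N(S \ {(e,i)}). -/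
/-- The rank of a set `S` in a matroid `M`: the maximum cardinality of an
independent subset of `S`. -/
noncomputable def matroidRank {α : Type*} (M : Matroid α) (S : Set α) : ℕ :=
  sSup {r | ∃ I : Set α, I ⊆ S ∧ M.Indep I ∧ I.ncard = r}

/-- The span (closure) of a set `S` in a matroid `M`: the elements whose addition
does not increase the rank. -/
noncomputable def matroidSpan {α : Type*} (M : Matroid α) (S : Set α) : Set α :=
  {a | matroidRank M (S ∪ {a}) = matroidRank M S}

/-- The independence predicate of the extended `k`-fold union of `M`: a set
`S ⊆ E × [k]` is independent iff it is a union `S₁ ∪ ⋯ ∪ S_k` where each `S_j`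
has pairwise distinct first coordinates and the set of first coordinates of `S_j`
is independent in `M`. -/
def ExtendedIndep {α : Type*} (M : Matroid α) (k : ℕ) (S : Set (α × Fin k)) : Prop :=
  ∃ Ss : Fin k → Set (α × Fin k),
    S = ⋃ j, Ss j ∧
    ∀ j, Set.InjOn Prod.fst (Ss j) ∧ M.Indep (Prod.fst '' Ss j)

/-- The occupancy function `occ_e(S) = k − rank_N(S ∪ ({e} × [k])) + rank_N(S)`,
valued in `ℤ`. -/
noncomputable def occ {α : Type*} {k : ℕ} (N : Matroid (α × Fin k)) (e : α)
    (S : Set (α × Fin k)) : ℤ :=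
  (k : ℤ) - matroidRank N (S ∪ ({e} ×ˢ (Set.univ : Set (Fin k)))) + matroidRank N S

/-! Swapping two copies `(e, i)` and `(e, j)` of `e` preserves first coordinates, so it is an
automorphism of `N`. Hence if `(e, i)` is spanned by `S \ {(e, i)}`, so is every `(e, j)`:
the whole fiber `{e} × [k]` adds nothing to the rank of `S`, and `occ_e(S) = k`. -/

open Set

namespace Matroid

variable {β : Type*} {N : Matroid β}

lemma rankFinite_of_indep_subset {F : Set β} (hF : F.Finite) (h : ∀ I, N.Indep I → I ⊆ F) :
    N.RankFinite :=
  let ⟨B, hB⟩ := N.exists_isBase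
  hB.rankFinite_of_finite (hF.subset (h B hB.indep))

lemma eRk_le_eRk_image {f : β → β} (hf : f.Injective)
    (hind : ∀ I, N.Indep I → N.Indep (f '' I)) (X : Set β) : N.eRk X ≤ N.eRk (f '' X) := by
  obtain ⟨J, hJ⟩ := N.exists_isBasis' X
  rw [← hJ.encard_eq_eRk, ← hf.encard_image]
  exact (hind J hJ.indep).encard_le_eRk_of_subset (image_mono hJ.subset)

lemma eRk_image_of_involutive {f : β → β} (hf : f.Involutive)
    (hind : ∀ I, N.Indep I → N.Indep (f '' I)) (X : Set β) : N.eRk (f '' X) = N.eRk X := by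
  refine le_antisymm ?_ (eRk_le_eRk_image hf.injective hind X)
  simpa only [image_image, hf _, image_id'] using eRk_le_eRk_image hf.injective hind (f '' X)

lemma eRk_insert_eq_of_swap [DecidableEq β] {a b : β} {X : Set β} (ha : a ∉ X) (hb : b ∉ X)
    (hind : ∀ I, N.Indep I → N.Indep (Equiv.swap a b '' I)) :
    N.eRk (insert b X) = N.eRk (insert a X) := by
  have hX : Equiv.swap a b '' X = X := by
    refine (image_congr fun x hx => ?_).trans (image_id X)
    exact Equiv.swap_apply_of_ne_of_ne (ne_of_mem_of_not_mem hx ha) (ne_of_mem_of_not_mem hx hb)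
  rw [← eRk_image_of_involutive (Equiv.swap_apply_self a b) hind, image_insert_eq,
    Equiv.swap_apply_right, hX]

end Matroid

section matroidRank

variable {β : Type*} {N : Matroid β} [N.RankFinite]

lemma matroidRank_eq_eRk (X : Set β) : (matroidRank N X : ℕ∞) = N.eRk X := by
  obtain ⟨J, hJ⟩ := N.exists_isBasis' X
  have hJfin := hJ.indep.finite
  have hJmax : IsGreatest {r | ∃ I, I ⊆ X ∧ N.Indep I ∧ I.ncard = r} J.ncard := by
    refine ⟨⟨J, hJ.subset, hJ.indep, rfl⟩, ?_⟩
    rintro _ ⟨I, hIX, hI, rfl⟩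
    have hle := hI.encard_le_eRk_of_subset hIX
    rw [← hJ.encard_eq_eRk, ← hI.finite.cast_ncard_eq, ← hJfin.cast_ncard_eq] at hle
    exact_mod_cast hle
  rw [matroidRank, hJmax.csSup_eq, hJfin.cast_ncard_eq, hJ.encard_eq_eRk]

lemma matroidRank_eq_matroidRank_iff {X Y : Set β} :
    matroidRank N X = matroidRank N Y ↔ N.eRk X = N.eRk Y := by
  rw [← Nat.cast_inj (R := ℕ∞), matroidRank_eq_eRk, matroidRank_eq_eRk]

lemma mem_matroidSpan_iff {a : β} {X : Set β} :
    a ∈ matroidSpan N X ↔ N.eRk (insert a X) = N.eRk X := by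
  rw [matroidSpan, mem_ofPred_eq, matroidRank_eq_matroidRank_iff, union_singleton]

end matroidRank

section ExtendedIndep

variable {α : Type*} {M : Matroid α} {k : ℕ} {S : Set (α × Fin k)}

lemma ExtendedIndep.subset_ground_prod (h : ExtendedIndep M k S) : S ⊆ M.E ×ˢ univ := by
  obtain ⟨Ss, rfl, hSs⟩ := h
  exact iUnion_subset fun j p hp => ⟨(hSs j).2.subset_ground (mem_image_of_mem _ hp), mem_univ _⟩

lemma ExtendedIndep.image_of_fst_eq {f : α × Fin k → α × Fin k} (hf : ∀ p, (f p).1 = p.1)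
    (h : ExtendedIndep M k S) : ExtendedIndep M k (f '' S) := by
  obtain ⟨Ss, rfl, hSs⟩ := h
  refine ⟨fun j => f '' Ss j, image_iUnion, fun j => ⟨?_, ?_⟩⟩
  · rintro _ ⟨p, hp, rfl⟩ _ ⟨q, hq, rfl⟩ hpq
    rw [(hSs j).1 hp hq (by simpa only [hf] using hpq)]
  · simpa only [image_image, hf] using (hSs j).2

end ExtendedIndep

lemma fst_swap_mk_apply {α ι : Type*} [DecidableEq α] [DecidableEq ι] {e : α} {i j : ι}
    (p : α × ι) : (Equiv.swap (e, i) (e, j) p).1 = p.1 := by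
  rw [Equiv.swap_apply_def]
  split_ifs <;> simp_all

theorem occ_lt_not_spanned_general {α : Type*} (M : Matroid α) (hfin : M.E.Finite)
    (k : ℕ)
    (N : Matroid (α × Fin k))
    (hN : ∀ S : Set (α × Fin k), N.Indep S ↔ ExtendedIndep M k S)
    (e : α) (i : Fin k)
    (S : Set (α × Fin k))
    (hocc : occ N e S < (k : ℤ)) :
    (e, i) ∉ matroidSpan N (S \ {(e, i)}) := by
  classical
  have : N.RankFinite := Matroid.rankFinite_of_indep_subset (hfin.prod finite_univ)
    fun I hI => ((hN I).1 hI).subset_ground_prod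
  intro hspan
  set S' := S \ {(e, i)}
  set fiber : Set (α × Fin k) := {e} ×ˢ univ
  have hfiber : ∀ p ∈ (S' ∪ fiber) \ S', N.eRk (insert p S') ≤ N.eRk S' := by
    rintro ⟨a, j⟩ ⟨hp | ⟨rfl : a = e, -⟩, hj⟩
    · exact absurd hp hj
    rw [← mem_matroidSpan_iff.1 hspan]
    refine (Matroid.eRk_insert_eq_of_swap (by simp [S']) hj fun I hI => ?_).le
    rw [hN] at hI ⊢
    exact hI.image_of_fst_eq fst_swap_mk_apply
  have hrk : N.eRk (S ∪ fiber) = N.eRk S := by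
    have hei : {(e, i)} ⊆ fiber := singleton_subset_iff.2 (mk_mem_prod rfl (mem_univ i))
    have hS'S : S' ∪ fiber = S ∪ fiber := by
      rw [← union_eq_self_of_subset_left hei, ← union_assoc, sdiff_union_self, union_assoc]
    refine le_antisymm ?_ (N.eRk_mono subset_union_left)
    rw [← hS'S, ← Matroid.eRk_eq_of_eRk_insert_le_forall subset_union_left hfiber]
    exact N.eRk_mono sdiff_subset
  rw [occ, matroidRank_eq_matroidRank_iff.2 hrk] at hocc
  omega

/-- If `occ_e(S) < k`, then `(e,i)` is not spanned by `S \ {(e,i)}` in the extended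
`k`-fold union. -/
theorem occ_lt_not_spanned {α : Type*} (M : Matroid α) (hfin : M.E.Finite)
    (k : ℕ) (hk : 1 ≤ k)
    (N : Matroid (α × Fin k)) (hNE : N.E = M.E ×ˢ (Set.univ : Set (Fin k)))
    (hN : ∀ S : Set (α × Fin k), N.Indep S ↔ ExtendedIndep M k S)
    (e : α) (he : e ∈ M.E) (i : Fin k)
    (S : Set (α × Fin k)) (hS : S ⊆ M.E ×ˢ (Set.univ : Set (Fin k)))
    (hocc : occ N e S < (k : ℤ)) :
    (e, i) ∉ matroidSpan N (S \ {(e, i)}) :=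
  occ_lt_not_spanned_general M hfin k N hN e i S hocc
end

section
/- Let M be a matroid on a finite ground set E, let k ≥ 1 be an integer, and let N be the extended k-fold union of M, with rank function rank_N. Then for every S₀ ⊆ E, rank_N(S₀ × [k]) = k · rank_M(S₀), where rank_M is the rank function of M. -/
/-! Each part `S_j` of an independent set of `N` inside `S₀ × [k]` projects injectively onto an
independent subset of `S₀`, so it has at most `rank_M(S₀)` elements; conversely, for a maximum
independent `I ⊆ S₀`, the set `I × [k]` is independent in `N`, taking `S_j = I × {j}`. -/

theorem matroidRank_set_bddAbove {α : Type*} (M : Matroid α) {S : Set α} (hS : S.Finite) :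
    BddAbove {r | ∃ I : Set α, I ⊆ S ∧ M.Indep I ∧ I.ncard = r} := by
  refine ⟨S.ncard, ?_⟩
  rintro r ⟨I, hIS, -, rfl⟩
  exact Set.ncard_le_ncard hIS hS

theorem exists_indep_ncard_eq_matroidRank {α : Type*} (M : Matroid α) {S : Set α}
    (hS : S.Finite) : ∃ I ⊆ S, M.Indep I ∧ I.ncard = matroidRank M S :=
  Nat.sSup_mem (s := {r | ∃ I : Set α, I ⊆ S ∧ M.Indep I ∧ I.ncard = r})
    ⟨0, ∅, Set.empty_subset _, M.empty_indep, Set.ncard_empty _⟩ (matroidRank_set_bddAbove M hS)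

theorem ncard_le_matroidRank {α : Type*} {M : Matroid α} {S I : Set α} (hS : S.Finite)
    (hIS : I ⊆ S) (hI : M.Indep I) : I.ncard ≤ matroidRank M S :=
  le_csSup (matroidRank_set_bddAbove M hS) ⟨I, hIS, hI, rfl⟩

theorem ExtendedIndep.ncard_le {α : Type*} {M : Matroid α} {k : ℕ} {S : Set α}
    {J : Set (α × Fin k)} (hJ : ExtendedIndep M k J) (hS : S.Finite)
    (hJS : J ⊆ S ×ˢ Set.univ) : J.ncard ≤ k * matroidRank M S := by
  obtain ⟨Ss, rfl, hSs⟩ := hJ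
  have hpart (j : Fin k) : (Ss j).ncard ≤ matroidRank M S := by
    rw [← (hSs j).1.ncard_image]
    refine ncard_le_matroidRank hS ?_ (hSs j).2
    rintro _ ⟨p, hp, rfl⟩
    exact (hJS (Set.subset_iUnion Ss j hp)).1
  calc (⋃ j, Ss j).ncard ≤ ∑ j, (Ss j).ncard := Set.ncard_iUnion_le_of_fintype Ss
    _ ≤ ∑ _j : Fin k, matroidRank M S := Finset.sum_le_sum fun j _ => hpart j
    _ = k * matroidRank M S := by simp

theorem Matroid.Indep.extendedIndep_prod_univ {α : Type*} {M : Matroid α} {I : Set α}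
    (hI : M.Indep I) (k : ℕ) : ExtendedIndep M k (I ×ˢ Set.univ) := by
  refine ⟨fun j => I ×ˢ {j}, ?_, fun j => ⟨?_, ?_⟩⟩
  · ext ⟨a, b⟩
    simp
  · rintro ⟨a, b⟩ ⟨-, hb⟩ ⟨c, d⟩ ⟨-, hd⟩ h
    simp_all
  · rwa [Set.fst_image_prod _ (Set.singleton_nonempty j)]

theorem rank_prod_eq_general {α : Type*} (M : Matroid α) (hfin : M.E.Finite)
    (k : ℕ)
    (N : Matroid (α × Fin k))
    (hN : ∀ S : Set (α × Fin k), N.Indep S ↔ ExtendedIndep M k S)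
    (S₀ : Set α) (hS₀ : S₀ ⊆ M.E) :
    matroidRank N (S₀ ×ˢ (Set.univ : Set (Fin k))) = k * matroidRank M S₀ := by
  have hS₀fin : S₀.Finite := hfin.subset hS₀
  have hprodfin : (S₀ ×ˢ (Set.univ : Set (Fin k))).Finite := hS₀fin.prod Set.finite_univ
  apply le_antisymm
  · obtain ⟨J, hJS, hJ, hJcard⟩ := exists_indep_ncard_eq_matroidRank N hprodfin
    rw [← hJcard]
    exact ((hN J).mp hJ).ncard_le hS₀fin hJS
  · obtain ⟨I, hIS, hI, hIcard⟩ := exists_indep_ncard_eq_matroidRank M hS₀fin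
    have hIk : (I ×ˢ (Set.univ : Set (Fin k))).ncard = k * I.ncard := by simp [mul_comm]
    rw [← hIcard, ← hIk]
    exact ncard_le_matroidRank hprodfin (Set.prod_mono hIS le_rfl)
      ((hN _).mpr (hI.extendedIndep_prod_univ k))

/-- `rank_N(S₀ × [k]) = k · rank_M(S₀)` for the extended `k`-fold union `N` of `M`. -/
theorem rank_prod_eq {α : Type*} (M : Matroid α) (hfin : M.E.Finite)
    (k : ℕ) (hk : 1 ≤ k)
    (N : Matroid (α × Fin k)) (hNE : N.E = M.E ×ˢ (Set.univ : Set (Fin k)))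
    (hN : ∀ S : Set (α × Fin k), N.Indep S ↔ ExtendedIndep M k S)
    (S₀ : Set α) (hS₀ : S₀ ⊆ M.E) :
    matroidRank N (S₀ ×ˢ (Set.univ : Set (Fin k))) = k * matroidRank M S₀ :=
  rank_prod_eq_general M hfin k N hN S₀ hS₀
end
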